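/- Let E_1,...,E_k be independent exponentially distributed random variables with rates α_1,...,α_k > 0. Then the probability that max(E_1,...,E_k) − min(E_1,...,E_k) ≤ t̄ equals ∑_{i=1}^k (α_i / ∑_{j=1}^k α_j) ∏_{j≠i} (1 − e^{−α_j t̄}). -/

import Mathlib

open MeasureTheory ProbabilityTheory Real

section PoolingAux

open Set

lemma expMeasure_eq_withDensity (r : ℝ) :
    expMeasure r = volume.withDensity (exponentialPDF r) := rfl

instance expMeasure_noAtoms (r : ℝ) : NullSingletonClass (expMeasure r) := by
  constructor
  intro x
  rw [expMeasure_eq_withDensity, withDensity_apply _ (measurableSet_singleton x),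
    setLIntegral_measure_zero _ _ (measure_singleton x)]

lemma expMeasure_Iic' {r : ℝ} (hr : 0 < r) (x : ℝ) :
    expMeasure r (Iic x) = ENNReal.ofReal (if 0 ≤ x then 1 - exp (-(r * x)) else 0) := by
  rw [expMeasure_eq_withDensity, withDensity_apply _ measurableSet_Iic]
  exact lintegral_exponentialPDF_eq_antiDeriv hr x

lemma expMeasure_Iio' {r : ℝ} (hr : 0 < r) (x : ℝ) :
    expMeasure r (Iio x) = ENNReal.ofReal (if 0 ≤ x then 1 - exp (-(r * x)) else 0) := by
  rw [← expMeasure_Iic' hr, ← Iic_diff_right, measure_diff_null (measure_singleton x)]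

lemma expMeasure_Icc' {r : ℝ} (hr : 0 < r) {s t : ℝ} (hs : 0 ≤ s) (ht : 0 ≤ t) :
    expMeasure r (Icc s (s + t)) = ENNReal.ofReal (exp (-(r * s)) * (1 - exp (-(r * t)))) := by
  have hsub : Iio s ⊆ Iic (s + t) := fun x hx => by
    simp only [mem_Iio] at hx; simp only [mem_Iic]; linarith
  rw [show Icc s (s + t) = Iic (s + t) \ Iio s from by
      ext x; simp only [mem_Icc, mem_diff, mem_Iic, mem_Iio, not_lt]; exact and_comm,
    measure_diff hsub measurableSet_Iio.nullMeasurableSet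
      (by rw [expMeasure_Iio' hr]; exact ENNReal.ofReal_ne_top),
    expMeasure_Iic' hr, expMeasure_Iio' hr, if_pos (by linarith), if_pos hs,
    ← ENNReal.ofReal_sub _ (by simp [exp_le_one_iff]; positivity)]
  congr 1
  rw [mul_add, neg_add, exp_add]
  ring

lemma lintegral_exponentialPDF_Ici {r : ℝ} (hr : 0 < r) :
    ∫⁻ s in Ici 0, exponentialPDF r s = 1 := by
  have h := lintegral_exponentialPDF_eq_one hr
  rw [← lintegral_add_compl (exponentialPDF r) measurableSet_Ici, compl_Ici,
    lintegral_exponentialPDF_of_nonpos le_rfl, add_zero] at h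
  exact h

lemma ae_nonneg_expMeasure (r : ℝ) : ∀ᵐ s ∂expMeasure r, 0 ≤ s := by
  rw [ae_iff]
  have : {s : ℝ | ¬ 0 ≤ s} = Iio 0 := by ext s; simpa [mem_Iio] using not_le
  rw [this, expMeasure_eq_withDensity, withDensity_apply _ measurableSet_Iio,
    lintegral_exponentialPDF_of_nonpos le_rfl]

lemma pi_exp_apply {k : ℕ} (α : Fin k → ℝ) (hα : ∀ i, 0 < α i) (i : Fin k)
    {B : Set (Fin k → ℝ)} (hB : MeasurableSet B) :
    Measure.pi (fun j => expMeasure (α j)) B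
      = ∫⁻ s, Measure.pi (fun j : {j : Fin k // ¬ j = i} => expMeasure (α j))
          {v | (fun j => if h : j = i then s else v ⟨j, h⟩) ∈ B} ∂(expMeasure (α i)) := by
  haveI : ∀ j, IsProbabilityMeasure (expMeasure (α j)) :=
    fun j => isProbabilityMeasure_expMeasure (hα j)
  set e := MeasurableEquiv.piEquivPiSubtypeProd (fun _ : Fin k => ℝ) (· = i) with he
  have hmp := (measurePreserving_piEquivPiSubtypeProd (fun j => expMeasure (α j)) (· = i)).symm e
  rw [← hmp.measure_preimage hB.nullMeasurableSet,
    Measure.prod_apply (e.symm.measurable hB)]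
  have hfam : (fun j : {j : Fin k // j = i} => expMeasure (α ↑j))
      = (fun _ => expMeasure (α i)) := funext fun j => by rw [show (j : Fin k) = i from j.2]
  have hfu : MeasurePreserving (MeasurableEquiv.funUnique {j : Fin k // j = i} ℝ)
      (Measure.pi fun j : {j : Fin k // j = i} => expMeasure (α ↑j)) (expMeasure (α i)) := by
    rw [show (Measure.pi fun j : {j : Fin k // j = i} => expMeasure (α ↑j))
        = Measure.pi (fun _ => expMeasure (α i)) from by rw [hfam]]
    exact measurePreserving_funUnique (expMeasure (α i)) _
  refine Eq.trans (lintegral_congr (g := fun u : { x : Fin k // x = i } → ℝ =>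
      (Measure.pi fun j : {j : Fin k // ¬ j = i} => expMeasure (α ↑j))
        {v | (fun j => if h : j = i then (MeasurableEquiv.funUnique {j : Fin k // j = i} ℝ) u
          else v ⟨j, h⟩) ∈ B}) fun u => ?_) ?_
  · congr 1
    ext v
    simp only [mem_preimage, mem_setOf_eq]
    have : e.symm (u, v) = (fun j => if h : j = i then
        (MeasurableEquiv.funUnique {j : Fin k // j = i} ℝ) u else v ⟨j, h⟩) := by
      funext j
      show (Equiv.piEquivPiSubtypeProd (· = i) (fun _ : Fin k => ℝ)).symm (u, v) j = _
      rw [Equiv.piEquivPiSubtypeProd_symm_apply]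
      split
      · exact congrArg u (Subsingleton.elim _ _)
      · rfl
    rw [this]
  · have h2 := hfu.lintegral_comp_emb (MeasurableEquiv.measurableEmbedding _)
      (fun s => (Measure.pi fun j : {j : Fin k // ¬ j = i} => expMeasure (α ↑j))
          {v | (fun j => if h : j = i then s else v ⟨j, h⟩) ∈ B})
    convert h2 using 2
    congr!

lemma pi_exp_diag_null {k : ℕ} (α : Fin k → ℝ) (hα : ∀ i, 0 < α i) {i j : Fin k}
    (hij : i ≠ j) :
    Measure.pi (fun l => expMeasure (α l)) {x | x i = x j} = 0 := by
  haveI : ∀ l, IsProbabilityMeasure (expMeasure (α l)) :=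
    fun l => isProbabilityMeasure_expMeasure (hα l)
  have hji : ¬ j = i := fun h => hij h.symm
  have hB : MeasurableSet {x : Fin k → ℝ | x i = x j} :=
    measurableSet_eq_fun (measurable_pi_apply i) (measurable_pi_apply j)
  rw [pi_exp_apply α hα i hB]
  have : ∀ s : ℝ, {v : {l : Fin k // ¬ l = i} → ℝ |
      (fun l => if h : l = i then s else v ⟨l, h⟩) ∈ {x : Fin k → ℝ | x i = x j}}
      = {v : {l : Fin k // ¬ l = i} → ℝ | v ⟨j, hji⟩ = s} := by
    intro s
    ext v
    simp only [mem_setOf_eq, dif_pos rfl, dif_neg hji]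
    exact eq_comm
  simp_rw [this]
  have hnull : ∀ s : ℝ, Measure.pi (fun l : {l : Fin k // ¬ l = i} => expMeasure (α ↑l))
      {v : {l : Fin k // ¬ l = i} → ℝ | v ⟨j, hji⟩ = s} = 0 := fun s =>
    Measure.pi_hyperplane (fun l : {l : Fin k // ¬ l = i} => expMeasure (α ↑l)) ⟨j, hji⟩ s
  simp_rw [hnull, lintegral_zero]

lemma measure_Ai {k : ℕ} (α : Fin k → ℝ) (hα : ∀ i, 0 < α i) (i : Fin k)
    {t : ℝ} (ht : 0 < t) :
    Measure.pi (fun j => expMeasure (α j)) {x | ∀ j, x i ≤ x j ∧ x j ≤ x i + t}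
      = ENNReal.ofReal ((α i / ∑ j, α j) *
          ∏ j ∈ Finset.univ.erase i, (1 - exp (-(α j * t)))) := by
  haveI : ∀ j, IsProbabilityMeasure (expMeasure (α j)) :=
    fun j => isProbabilityMeasure_expMeasure (hα j)
  set β := ∑ j ∈ Finset.univ.erase i, α j with hβ
  set C := ∏ j ∈ Finset.univ.erase i, (1 - exp (-(α j * t))) with hC
  have hSum : (∑ j, α j) = α i + β := (Finset.add_sum_erase _ α (Finset.mem_univ i)).symm
  have hSumPos : 0 < ∑ j, α j := Finset.sum_pos (fun j _ => hα j) ⟨i, Finset.mem_univ i⟩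
  have hCnonneg : 0 ≤ C := Finset.prod_nonneg fun j _ => by
    have : exp (-(α j * t)) ≤ 1 := exp_le_one_iff.mpr (by nlinarith [hα j])
    linarith
  have hB : MeasurableSet {x : Fin k → ℝ | ∀ j, x i ≤ x j ∧ x j ≤ x i + t} := by
    have : {x : Fin k → ℝ | ∀ j, x i ≤ x j ∧ x j ≤ x i + t}
        = ⋂ j, ({x : Fin k → ℝ | x i ≤ x j} ∩ {x : Fin k → ℝ | x j ≤ x i + t}) := by
      ext x; simp [mem_iInter, forall_and]
    rw [this]
    exact MeasurableSet.iInter fun j =>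
      (measurableSet_le (measurable_pi_apply i) (measurable_pi_apply j)).inter
      (measurableSet_le (measurable_pi_apply j) (by fun_prop))
  rw [pi_exp_apply α hα i hB]
  have hset : ∀ s : ℝ, {v : {j : Fin k // ¬ j = i} → ℝ |
      (fun j => if h : j = i then s else v ⟨j, h⟩) ∈
        {x : Fin k → ℝ | ∀ j, x i ≤ x j ∧ x j ≤ x i + t}}
      = Set.pi univ (fun _ : {j : Fin k // ¬ j = i} => Icc s (s + t)) := by
    intro s
    ext v
    simp only [mem_setOf_eq, Set.mem_pi, mem_univ, forall_true_left, mem_Icc,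
      eq_self_iff_true, dite_true]
    constructor
    · rintro h ⟨j, hj⟩
      have h2 := h j
      rw [dif_neg hj] at h2
      exact h2
    · intro h j
      by_cases hj : j = i
      · subst hj
        rw [dif_pos rfl]
        exact ⟨le_rfl, by linarith⟩
      · rw [dif_neg hj]
        exact h ⟨j, hj⟩
  simp_rw [hset, Measure.pi_pi]
  have hae : ∀ᵐ s ∂expMeasure (α i), 0 ≤ s := ae_nonneg_expMeasure (α i)
  have hcong : (fun s => ∏ j : {j : Fin k // ¬ j = i}, expMeasure (α ↑j) (Icc s (s + t)))
      =ᵐ[expMeasure (α i)] (fun s => ENNReal.ofReal (exp (-(β * s)) * C)) := by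
    filter_upwards [hae] with s hs
    have hfac : ∀ j : {j : Fin k // ¬ j = i}, expMeasure (α ↑j) (Icc s (s + t))
        = ENNReal.ofReal (exp (-(α ↑j * s)) * (1 - exp (-(α ↑j * t)))) :=
      fun j => expMeasure_Icc' (hα j) hs ht.le
    simp_rw [hfac]
    rw [← ENNReal.ofReal_prod_of_nonneg (fun j _ => by
      have h1 : exp (-(α ↑j * t)) ≤ 1 := exp_le_one_iff.mpr (by nlinarith [hα (j : Fin k)])
      have h2 := (exp_pos (-(α ↑j * s))).le
      nlinarith)]
    congr 1
    rw [← Finset.prod_subtype (Finset.univ.erase i)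
      (fun j => by simp [Finset.mem_erase]) (fun j => exp (-(α j * s)) * (1 - exp (-(α j * t)))),
      Finset.prod_mul_distrib, ← Real.exp_sum]
    congr 2
    rw [Finset.sum_mul, ← Finset.sum_neg_distrib]
  rw [lintegral_congr_ae hcong]
  -- now the one-dimensional integral
  rw [expMeasure_eq_withDensity, lintegral_withDensity_eq_lintegral_mul _
    (show Measurable (exponentialPDF (α i)) from
      (measurable_exponentialPDFReal (α i)).ennreal_ofReal)
    (show Measurable (fun s : ℝ => ENNReal.ofReal (rexp (-(β * s)) * C)) from
      ((Real.continuous_exp.comp (continuous_neg.comp (continuous_mul_left β))).mul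
        continuous_const).measurable.ennreal_ofReal)]
  simp only [Pi.mul_apply]
  rw [← lintegral_add_compl (fun s => exponentialPDF (α i) s * ENNReal.ofReal (exp (-(β * s)) * C))
    measurableSet_Ici (μ := volume), compl_Ici]
  have hIio : (∫⁻ s in Iio 0, exponentialPDF (α i) s * ENNReal.ofReal (exp (-(β * s)) * C)) = 0 := by
    rw [setLIntegral_congr_fun_ae measurableSet_Iio (ae_of_all _ fun s (hs : s < 0) => by
      rw [exponentialPDF_of_neg hs, zero_mul]), lintegral_zero]
  have hIci : (∫⁻ s in Ici 0, exponentialPDF (α i) s * ENNReal.ofReal (exp (-(β * s)) * C))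
      = ENNReal.ofReal ((α i / ∑ j, α j) * C) := by
    rw [setLIntegral_congr_fun_ae measurableSet_Ici (ae_of_all _ fun s (hs : 0 ≤ s) =>
      show exponentialPDF (α i) s * ENNReal.ofReal (exp (-(β * s)) * C)
        = ENNReal.ofReal ((α i / ∑ j, α j) * C) * exponentialPDF (∑ j, α j) s from by
      rw [exponentialPDF_of_nonneg hs, exponentialPDF_of_nonneg hs,
        ← ENNReal.ofReal_mul (mul_nonneg (hα i).le (exp_pos _).le),
        ← ENNReal.ofReal_mul (mul_nonneg (div_nonneg (hα i).le hSumPos.le) hCnonneg)]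
      congr 1
      have hexp : exp (-(α i * s)) * exp (-(β * s)) = exp (-((∑ j, α j) * s)) := by
        rw [← exp_add]; congr 1; rw [hSum]; ring
      rw [show α i / (∑ j, α j) * C * ((∑ j, α j) * exp (-((∑ j, α j) * s)))
          = α i * C * exp (-((∑ j, α j) * s)) from by field_simp, ← hexp]
      ring)]
    rw [lintegral_const_mul _ (show Measurable (exponentialPDF (∑ j, α j)) from
      (measurable_exponentialPDFReal _).ennreal_ofReal),
      lintegral_exponentialPDF_Ici hSumPos, mul_one]
  rw [hIio, hIci, add_zero]

end PoolingAux

/-- The probability that `k` independent exponential random variables with rates `α i > 0`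
all occur within a window of length `t̄`, i.e. `max - min ≤ t̄`, equals
`∑ i, (α i / ∑ j, α j) * ∏_{j ≠ i} (1 - exp (-α j * t̄))`. -/
theorem pooling_probability
    {Ω : Type*} [MeasurableSpace Ω] (μ : Measure Ω) [IsProbabilityMeasure μ]
    (k : ℕ) (hk : 1 ≤ k) (α : Fin k → ℝ) (hα : ∀ i, 0 < α i)
    (E : Fin k → Ω → ℝ) (hmeas : ∀ i, Measurable (E i))
    (hdist : ∀ i, Measure.map (E i) μ = expMeasure (α i))
    (hindep : iIndepFun E μ)
    (tbar : ℝ) (htbar : 0 < tbar) :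
    μ {ω | (Finset.univ.sup' ⟨⟨0, hk⟩, Finset.mem_univ _⟩ fun i => E i ω)
         - (Finset.univ.inf' ⟨⟨0, hk⟩, Finset.mem_univ _⟩ fun i => E i ω) ≤ tbar}
      = ENNReal.ofReal
          (∑ i, (α i / ∑ j, α j) *
            ∏ j ∈ Finset.univ.erase i, (1 - exp (-(α j) * tbar))) := by
  have hne : (Finset.univ : Finset (Fin k)).Nonempty := ⟨⟨0, hk⟩, Finset.mem_univ _⟩
  set ν : Fin k → Measure ℝ := fun j => expMeasure (α j) with hν
  haveI : ∀ j, IsProbabilityMeasure (ν j) := fun j => isProbabilityMeasure_expMeasure (hα j)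
  set T : Ω → (Fin k → ℝ) := fun ω j => E j ω with hT
  have hTm : Measurable T := measurable_pi_lambda _ hmeas
  have hmap : Measure.map T μ = Measure.pi ν := by
    refine (Measure.pi_eq fun s hs => ?_).symm
    rw [Measure.map_apply hTm (MeasurableSet.univ_pi hs)]
    have hpre : T ⁻¹' Set.pi Set.univ s = ⋂ j ∈ (Finset.univ : Finset (Fin k)), E j ⁻¹' s j := by
      ext ω
      simp [Set.mem_pi, hT]
    rw [hpre, hindep.measure_inter_preimage_eq_mul Finset.univ (fun j _ => hs j)]
    exact Finset.prod_congr rfl fun j _ => by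
      rw [← Measure.map_apply (hmeas j) (hs j), hdist j]
  set A : Fin k → Set (Fin k → ℝ) := fun i => {x | ∀ j, x i ≤ x j ∧ x j ≤ x i + tbar} with hA
  have hAmeas : ∀ i, MeasurableSet (A i) := by
    intro i
    have : A i = ⋂ j, ({x : Fin k → ℝ | x i ≤ x j} ∩ {x | x j ≤ x i + tbar}) := by
      ext x; simp [hA, forall_and]
    rw [this]
    exact MeasurableSet.iInter fun j =>
      (measurableSet_le (measurable_pi_apply i) (measurable_pi_apply j)).inter
      (measurableSet_le (measurable_pi_apply j) (by fun_prop))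
  have hevent : {ω | (Finset.univ.sup' hne fun i => E i ω)
      - (Finset.univ.inf' hne fun i => E i ω) ≤ tbar} = T ⁻¹' (⋃ i, A i) := by
    ext ω
    simp only [Set.mem_setOf_eq, Set.mem_preimage, Set.mem_iUnion, hA, hT]
    constructor
    · intro h
      obtain ⟨i, -, hi⟩ := Finset.exists_mem_eq_inf' hne fun j => E j ω
      refine ⟨i, fun j => ⟨?_, ?_⟩⟩
      · rw [← hi]
        exact Finset.inf'_le (fun j => E j ω) (Finset.mem_univ j)
      · have h1 : E j ω ≤ Finset.univ.sup' hne fun j => E j ω :=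
          Finset.le_sup' (fun j => E j ω) (Finset.mem_univ j)
        have h2 : (Finset.univ.inf' hne fun j => E j ω) = E i ω := hi
        linarith
    · rintro ⟨i, hi⟩
      have h1 : (Finset.univ.sup' hne fun j => E j ω) ≤ E i ω + tbar :=
        Finset.sup'_le _ _ fun j _ => (hi j).2
      have h2 : E i ω ≤ Finset.univ.inf' hne fun j => E j ω :=
        Finset.le_inf' _ _ fun j _ => (hi j).1
      linarith
  rw [hevent, ← Measure.map_apply hTm (MeasurableSet.iUnion hAmeas), hmap,
    measure_iUnion₀ ?pd (fun i => (hAmeas i).nullMeasurableSet), tsum_fintype]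
  case pd =>
    intro i j hij
    have hsub : A i ∩ A j ⊆ {x : Fin k → ℝ | x i = x j} := by
      rintro x ⟨h1, h2⟩
      exact le_antisymm (h1 j).1 (h2 i).1
    exact measure_mono_null hsub (pi_exp_diag_null α hα hij)
  have hval : ∀ i, Measure.pi ν (A i) = ENNReal.ofReal ((α i / ∑ j, α j) *
      ∏ j ∈ Finset.univ.erase i, (1 - Real.exp (-(α j * tbar)))) :=
    fun i => measure_Ai α hα i htbar
  simp_rw [hval]
  rw [show (∑ i, (α i / ∑ j, α j) * ∏ j ∈ Finset.univ.erase i, (1 - Real.exp (-(α j) * tbar)))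
      = ∑ i, (α i / ∑ j, α j) * ∏ j ∈ Finset.univ.erase i, (1 - Real.exp (-(α j * tbar))) from by
    simp [neg_mul]]
  rw [ENNReal.ofReal_sum_of_nonneg]
  intro i _
  have hSumPos : 0 < ∑ j, α j := Finset.sum_pos (fun j _ => hα j) hne
  refine mul_nonneg (div_nonneg (hα i).le hSumPos.le) (Finset.prod_nonneg fun j _ => ?_)
  have : Real.exp (-(α j * tbar)) ≤ 1 := Real.exp_le_one_iff.mpr (by nlinarith [hα j])
  linarith
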